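/- CQR impossibility: Fix α ∈ (0,1) and M > 0. There exist a linear lower-quantile model f^lo(x) = β₁x₁ + β₂x₂ on ℝ² with β₂ ≠ 0, a distribution with Y = X₁ + X₂, X₁, X₂ ∼ Uniform[0,1], and a contaminated test point X̃ = (X₁, z) with the outlier z depending on β₁, β₂, M, such that max(f^lo(X̃) − Y, Y − f^up(X̃)) ≥ M almost surely; hence any CQR-type interval [f^lo(X̃) − q̂, f^up(X̃) + q̂] with coverage at least 1−α must satisfy P(q̂ ≥ M) ≥ 1−α. -/

import Mathlib

open MeasureTheory

/-! With `β₁ = β₂ = 1` and outlier `z = M + 1`, the lower-quantile model at the contaminated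
point exceeds the response by `M + 1 - X₂ ≥ M`, because `X₂ ≤ 1` almost surely. So the CQR
score is at least `M` almost surely, and every event on which the score is covered by `q̂` is,
up to a null set, contained in `{M ≤ q̂}`. -/

theorem ae_mem_of_map_eq_restrict {Ω α : Type*} [MeasurableSpace Ω] [MeasurableSpace α]
    {μ : Measure Ω} {ν : Measure α} {X : Ω → α} {s : Set α} (hX : Measurable X)
    (hs : MeasurableSet s) (hmap : μ.map X = ν.restrict s) : ∀ᵐ ω ∂μ, X ω ∈ s :=
  ae_of_ae_map hX.aemeasurable (hmap ▸ ae_restrict_mem hs)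

theorem measure_setOf_le_le_measure_setOf_le {Ω : Type*} [MeasurableSpace Ω] {μ : Measure Ω}
    {S q : Ω → ℝ} {c : ℝ} (hS : ∀ᵐ ω ∂μ, c ≤ S ω) :
    μ {ω | S ω ≤ q ω} ≤ μ {ω | c ≤ q ω} :=
  measure_mono_ae <| hS.mono fun _ hc hq => hc.trans hq

theorem cqr_impossibility_general (α M : ℝ) :
    ∃ β₁ β₂ z : ℝ, β₂ ≠ 0 ∧
      ∀ (Ω : Type) (_ : MeasurableSpace Ω) (ℙ : Measure Ω), IsProbabilityMeasure ℙ →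
        ∀ (X₁ X₂ : Ω → ℝ), Measurable X₁ → Measurable X₂ →
          Measure.map X₁ ℙ = volume.restrict (Set.Icc (0 : ℝ) 1) →
          Measure.map X₂ ℙ = volume.restrict (Set.Icc (0 : ℝ) 1) →
          ∀ fup : ℝ × ℝ → ℝ,
            (∀ᵐ ω ∂ℙ, M ≤ max ((β₁ * X₁ ω + β₂ * z) - (X₁ ω + X₂ ω))
                ((X₁ ω + X₂ ω) - fup (X₁ ω, z))) ∧
            ∀ qhat : Ω → ℝ,
              ENNReal.ofReal (1 - α) ≤
                ℙ {ω | max ((β₁ * X₁ ω + β₂ * z) - (X₁ ω + X₂ ω))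
                    ((X₁ ω + X₂ ω) - fup (X₁ ω, z)) ≤ qhat ω} →
              ENNReal.ofReal (1 - α) ≤ ℙ {ω | M ≤ qhat ω} := by
  refine ⟨1, 1, M + 1, one_ne_zero, ?_⟩
  intro Ω _ ℙ _ X₁ X₂ _ hX₂ _ hmap₂ fup
  have hX₂_le_one : ∀ᵐ ω ∂ℙ, X₂ ω ≤ 1 :=
    (ae_mem_of_map_eq_restrict hX₂ measurableSet_Icc hmap₂).mono fun _ h => h.2
  have hscore : ∀ᵐ ω ∂ℙ, M ≤ max ((1 * X₁ ω + 1 * (M + 1)) - (X₁ ω + X₂ ω))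
      ((X₁ ω + X₂ ω) - fup (X₁ ω, M + 1)) :=
    hX₂_le_one.mono fun ω h => le_max_of_le_left (by linarith)
  exact ⟨hscore, fun qhat hcov => hcov.trans (measure_setOf_le_le_measure_setOf_le hscore)⟩

/-- CQR impossibility: there are a linear lower-quantile model `f^lo(x) = β₁x₁ + β₂x₂`
with `β₂ ≠ 0` and an outlier value `z` such that the CQR score at the contaminated test
point is at least `M` almost surely, for any upper-quantile model `f^up`; hence any
CQR interval with `1-α` coverage has `P(q̂ ≥ M) ≥ 1-α`. -/
theorem cqr_impossibility (α M : ℝ) (hα0 : 0 < α) (hα1 : α < 1) (hM : 0 < M) :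
    ∃ β₁ β₂ z : ℝ, β₂ ≠ 0 ∧
      ∀ (Ω : Type) (_ : MeasurableSpace Ω) (ℙ : Measure Ω), IsProbabilityMeasure ℙ →
        ∀ (X₁ X₂ : Ω → ℝ), Measurable X₁ → Measurable X₂ →
          Measure.map X₁ ℙ = volume.restrict (Set.Icc (0 : ℝ) 1) →
          Measure.map X₂ ℙ = volume.restrict (Set.Icc (0 : ℝ) 1) →
          ∀ fup : ℝ × ℝ → ℝ,
            (∀ᵐ ω ∂ℙ, M ≤ max ((β₁ * X₁ ω + β₂ * z) - (X₁ ω + X₂ ω))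
                ((X₁ ω + X₂ ω) - fup (X₁ ω, z))) ∧
            ∀ qhat : Ω → ℝ,
              ENNReal.ofReal (1 - α) ≤
                ℙ {ω | max ((β₁ * X₁ ω + β₂ * z) - (X₁ ω + X₂ ω))
                    ((X₁ ω + X₂ ω) - fup (X₁ ω, z)) ≤ qhat ω} →
              ENNReal.ofReal (1 - α) ≤ ℙ {ω | M ≤ qhat ω} :=
  cqr_impossibility_general α M
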